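/- For all partial multifunctions f : ⊆ (X₀,δ_{X₀}) ⇉ (Y₀,δ_{Y₀}) and g : ⊆ (X₁,δ_{X₁}) ⇉ (Y₁,δ_{Y₁}) on represented spaces, f ⊞ g is the supremum (least upper bound) of f and g with respect to strong Weihrauch reducibility ≤_sW: f ≤_sW f ⊞ g, g ≤_sW f ⊞ g, and for any partial multifunction h on represented spaces with f ≤_sW h and g ≤_sW h, one has f ⊞ g ≤_sW h. -/

import Mathlib

attribute [local instance] Classical.propDecidable

namespace StrongWeihrauch

noncomputable section

/-! ### Cantor space, monotone approximations, and the evaluation map -/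

/-- Cantor space `2^ω`; we identify subsets of `ω` with their characteristic functions. -/
abbrev Cantor : Type := ℕ → Bool

/-- The coded triple `⟨n,s,i⟩`. -/
def tpl (n s i : ℕ) : ℕ := Nat.pair n (Nat.pair s i)

/-- A monotone approximation (Definition 3.1): every element has the form `⟨n,s,i⟩` with
`i < 2`; for each `n` there is at most one pair `(s,i)` with `⟨n,s,i⟩ ∈ a`; and the stages `s`
are strictly increasing in `n`. -/
def MonotoneApprox (a : Cantor) : Prop :=
  (∀ k, a k = true → ∃ n s i, i < 2 ∧ k = tpl n s i) ∧
  (∀ n s t i j, a (tpl n s i) = true → a (tpl n t j) = true → s = t ∧ i = j) ∧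
  (∀ m n s t i j, a (tpl m s i) = true → a (tpl n t j) = true → m < n → s < t)

/-- A total monotone approximation: every `n` gets a value. -/
def TotalMonotoneApprox (a : Cantor) : Prop :=
  MonotoneApprox a ∧ ∀ n, ∃ s i, i < 2 ∧ a (tpl n s i) = true

/-- The value of the evaluation map `e` on a (total) monotone approximation:
`eVal a n = i` iff `⟨n,s,i⟩ ∈ a` for some `s`. -/
def eVal (a : Cantor) : Cantor := fun n => decide (∃ s, a (tpl n s 1) = true)

/-- The evaluation map `e : ⊆ 2^ω → 2^ω`, the partial function whose domain is the set of
total monotone approximations `a`, with `e(a)(n) = i` iff `⟨n,s,i⟩ ∈ a` for some `s`. -/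
def evalMA : Cantor →. Cantor := fun a => ⟨TotalMonotoneApprox a, fun _ => eVal a⟩

/-! ### Turing functionals -/

/-- The oracle information available at stage `s`: the first `s` bits of `p`. -/
def initSeg (p : Cantor) (s : ℕ) : List Bool := (List.range s).map p

/-- A `{0,1}`-valued Turing functional on Cantor space, presented by a computable monotone
finite-prefix approximation: `approx σ n = some b` means that the computation on input `n`
with oracle prefix `σ` has converged, with output `b`. -/
structure TuringFunctional where
  approx : List Bool → ℕ → Option Bool
  computable : Computable₂ approx
  mono : ∀ σ τ n b, σ <+: τ → approx σ n = some b → approx τ n = some b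

namespace TuringFunctional

/-- `Φ^p(n)[s]↓`. -/
def ConvAt (Φ : TuringFunctional) (p : Cantor) (n s : ℕ) : Prop :=
  (Φ.approx (initSeg p s) n).isSome = true

/-- `s` is least such that `Φ^p(n)[s]↓`. -/
def LeastStage (Φ : TuringFunctional) (p : Cantor) (n s : ℕ) : Prop :=
  Φ.ConvAt p n s ∧ ∀ t, t < s → ¬ Φ.ConvAt p n t

/-- Convention 2.1: if `Φ^p(n)[s]↓` then `Φ^p(m)[s]↓` for all `m < n`, and for each `s`
there is at most one `n` for which `s` is least with `Φ^p(n)[s]↓`. -/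
def Convention (Φ : TuringFunctional) : Prop :=
  (∀ (p : Cantor) (s n m : ℕ), m < n → Φ.ConvAt p n s → Φ.ConvAt p m s) ∧
  (∀ (p : Cantor) (s n n' : ℕ), Φ.LeastStage p n s → Φ.LeastStage p n' s → n = n')

/-- The partial function `⊆ 2^ω → 2^ω` computed by `Φ`; it is defined at `p` exactly when
`Φ(p)` is total, in which case its value is the map `n ↦ Φ^p(n)`. -/
def eval (Φ : TuringFunctional) : Cantor →. Cantor :=
  fun p => ⟨∀ n, ∃ s b, Φ.approx (initSeg p s) n = some b,
    fun h n => (h n).choose_spec.choose⟩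

end TuringFunctional

/-- `a_{Φ(p)}`: the set of all `⟨n,s,i⟩` where `s` is least such that `Φ^p(n)[s]↓ = i`. -/
def approxSeq (Φ : TuringFunctional) (p : Cantor) : Cantor := fun k =>
  decide (∃ n s b, k = tpl n s (Bool.toNat b) ∧ Φ.LeastStage p n s ∧
    Φ.approx (initSeg p s) n = some b)

/-- Turing reducibility `q ≤_T p` on Cantor space. -/
def TuringLe (q p : Cantor) : Prop := ∃ Φ : TuringFunctional, Φ.eval p = Part.some q

/-! ### Pairing on Cantor space -/

/-- The effective join `⟨p,q⟩` on Cantor space. -/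
def pairC (p q : Cantor) : Cantor := fun n => if n % 2 = 0 then p (n / 2) else q (n / 2)

def leftC (r : Cantor) : Cantor := fun n => r (2 * n)

def rightC (r : Cantor) : Cantor := fun n => r (2 * n + 1)

/-- The singleton `{i} ⊆ ω` as an element of Cantor space. -/
def natSet (i : ℕ) : Cantor := fun n => decide (n = i)

/-- `⟨i,p⟩`, i.e. `⟨{i},p⟩`. -/
def inC (i : ℕ) (p : Cantor) : Cantor := pairC (natSet i) p

lemma leftC_pairC (p q : Cantor) : leftC (pairC p q) = p := by
  funext n
  have h1 : 2 * n % 2 = 0 := by omega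
  have h2 : 2 * n / 2 = n := by omega
  simp [leftC, pairC, h1, h2]

lemma rightC_pairC (p q : Cantor) : rightC (pairC p q) = q := by
  funext n
  have h1 : (2 * n + 1) % 2 = 1 := by omega
  have h2 : (2 * n + 1) / 2 = n := by omega
  simp [rightC, pairC, h1, h2]

lemma tpl_inj {n s i n' s' i' : ℕ} (h : tpl n s i = tpl n' s' i') :
    n = n' ∧ s = s' ∧ i = i' := by
  unfold tpl at h
  rw [Nat.pair_eq_pair] at h
  rcases h with ⟨h1, h2⟩
  rw [Nat.pair_eq_pair] at h2
  exact ⟨h1, h2.1, h2.2⟩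

lemma toNat_lt_two (b : Bool) : b.toNat < 2 := by cases b <;> decide

/-- Encoding of `q ∈ 2^ω` as a total monotone approximation evaluating to `q`. -/
def maEncode (q : Cantor) : Cantor := fun k => decide (∃ n, k = tpl n n (q n).toNat)

lemma maEncode_mem {q : Cantor} {k : ℕ} :
    maEncode q k = true ↔ ∃ n, k = tpl n n (q n).toNat := by
  simp [maEncode]

lemma maEncode_total (q : Cantor) : TotalMonotoneApprox (maEncode q) := by
  refine ⟨⟨?_, ?_, ?_⟩, ?_⟩
  · intro k hk
    obtain ⟨n, rfl⟩ := maEncode_mem.mp hk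
    exact ⟨n, n, (q n).toNat, toNat_lt_two _, rfl⟩
  · intro n s t i j h1 h2
    obtain ⟨m, hm⟩ := maEncode_mem.mp h1
    obtain ⟨m', hm'⟩ := maEncode_mem.mp h2
    obtain ⟨e1, e2, e3⟩ := tpl_inj hm
    obtain ⟨f1, f2, f3⟩ := tpl_inj hm'
    have hmm' : m = m' := by omega
    refine ⟨by omega, by rw [e3, f3, hmm']⟩
  · intro m n s t i j h1 h2 hmn
    obtain ⟨u, hu⟩ := maEncode_mem.mp h1
    obtain ⟨v, hv⟩ := maEncode_mem.mp h2
    obtain ⟨e1, e2, _⟩ := tpl_inj hu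
    obtain ⟨f1, f2, _⟩ := tpl_inj hv
    omega
  · intro n
    exact ⟨n, (q n).toNat, toNat_lt_two _, maEncode_mem.mpr ⟨n, rfl⟩⟩

lemma eVal_maEncode (q : Cantor) : eVal (maEncode q) = q := by
  funext n
  have hiff : (∃ s, maEncode q (tpl n s 1) = true) ↔ q n = true := by
    constructor
    · rintro ⟨s, hs⟩
      obtain ⟨m, hm⟩ := maEncode_mem.mp hs
      obtain ⟨e1, e2, e3⟩ := tpl_inj hm
      subst e1
      cases hq : q n
      · rw [hq] at e3; simp at e3
      · rfl
    · intro hq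
      refine ⟨n, maEncode_mem.mpr ⟨n, ?_⟩⟩
      rw [hq]
      rfl
  cases hq : q n
  · have hne : ¬ (∃ s, maEncode q (tpl n s 1) = true) := by
      intro h
      have ht := hiff.mp h
      rw [ht] at hq
      exact Bool.noConfusion hq
    simp [eVal, hne]
  · simp [eVal, hiff.mpr hq]

/-- An explicit non-(monotone approximation). -/
def badMA : Cantor := fun k => decide (k = tpl 0 0 0 ∨ k = tpl 0 1 0)

lemma badMA_not : ¬ TotalMonotoneApprox badMA := by
  rintro ⟨⟨-, h2, -⟩, -⟩
  have ha : badMA (tpl 0 0 0) = true := by simp [badMA]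
  have hb : badMA (tpl 0 1 0) = true := by simp [badMA]
  have := (h2 0 0 1 0 0 ha hb).1
  omega

/-! ### Represented spaces -/

/-- A represented space: a set `X` together with a partial surjection `δ : ⊆ 2^ω → X`. -/
structure RepSp : Type 1 where
  X : Type
  δ : Cantor →. X
  surj : ∀ x : X, ∃ p, x ∈ δ p

namespace RepSp

/-- The product representation of `X₀ × X₁`: `δ(⟨p₀,p₁⟩) = (δ₀(p₀), δ₁(p₁))`. -/
def prod (A B : RepSp) : RepSp where
  X := A.X × B.X
  δ := fun r => (A.δ (leftC r)).bind fun x => (B.δ (rightC r)).map fun y => (x, y)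
  surj := by
    rintro ⟨x, y⟩
    obtain ⟨p, hp⟩ := A.surj x
    obtain ⟨q, hq⟩ := B.surj y
    refine ⟨pairC p q, ?_⟩
    simp only [leftC_pairC, rightC_pairC, Part.mem_bind_iff]
    exact ⟨x, hp, Part.mem_map _ hq⟩

/-- The disjoint-union representation of `X₀ ⊔ X₁`: `δ(⟨i,p⟩) = ⟨i, δᵢ(p)⟩`. -/
def sum (A B : RepSp) : RepSp where
  X := A.X ⊕ B.X
  δ := fun r =>
    if leftC r = natSet 0 then (A.δ (rightC r)).map Sum.inl
    else if leftC r = natSet 1 then (B.δ (rightC r)).map Sum.inr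
    else Part.none
  surj := by
    rintro (x | y)
    · obtain ⟨p, hp⟩ := A.surj x
      refine ⟨inC 0 p, ?_⟩
      have e1 : leftC (inC 0 p) = natSet 0 := leftC_pairC _ _
      have e2 : rightC (inC 0 p) = p := rightC_pairC _ _
      simp only [e1, e2, if_pos rfl]
      exact Part.mem_map _ hp
    · obtain ⟨p, hp⟩ := B.surj y
      refine ⟨inC 1 p, ?_⟩
      have e1 : leftC (inC 1 p) = natSet 1 := leftC_pairC _ _
      have e2 : rightC (inC 1 p) = p := rightC_pairC _ _
      have hne : natSet 1 ≠ natSet 0 := by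
        intro h
        have := congrFun h 0
        simp [natSet] at this
      simp only [e1, e2, hne, if_neg, if_pos rfl, ite_false, ite_true]
      exact Part.mem_map _ hp

/-- The completion `Ŷ = Y ∪ {∞_Y}` (with `∞_Y` rendered as `none`), represented by
`δ_Ŷ(p) = δ_Y(e(p))` if `p` is a total monotone approximation with `e(p) ∈ dom(δ_Y)`, and
`δ_Ŷ(p) = ∞_Y` otherwise. -/
def hat (A : RepSp) : RepSp where
  X := Option A.X
  δ := fun p => Part.some (((evalMA p).bind A.δ).toOption)
  surj := by
    intro y
    match y with
    | none =>
        refine ⟨badMA, ?_⟩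
        rw [Part.mem_some_iff]
        have hd : ¬ ((evalMA badMA).bind A.δ).Dom := by
          rintro ⟨h1, -⟩
          exact badMA_not h1
        rw [eq_comm, Part.toOption_eq_none_iff]
        exact hd
    | some x =>
        obtain ⟨p, hp⟩ := A.surj x
        refine ⟨maEncode p, ?_⟩
        rw [Part.mem_some_iff, eq_comm, Part.toOption_eq_some_iff]
        refine Part.mem_bind_iff.mpr ?_
        refine ⟨p, ?_, hp⟩
        exact ⟨maEncode_total p, eVal_maEncode p⟩

end RepSp

/-! ### Partial multifunctions and the Weihrauch reducibilities -/

/-- A partial multifunction `f : ⊆ X ⇉ Y` between represented spaces: `f.f x` is the set of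
solutions of the instance `x`, and the domain of `f` is the set of `x` with `f.f x ≠ ∅`. -/
structure MFn : Type 1 where
  A : RepSp
  B : RepSp
  f : A.X → Set B.X

namespace MFn

/-- The coproduct `f ⊔ g`. -/
def sqcup (f g : MFn) : MFn where
  A := f.A.sum g.A
  B := f.B.sum g.B
  f := Sum.elim (fun x => Sum.inl '' f.f x) (fun y => Sum.inr '' g.f y)

/-- The meet `f ⊓ g`, with `(f ⊓ g)(⟨x,y⟩) = ({0} × f(x)) ∪ ({1} × g(y))` for
`x ∈ dom f`, `y ∈ dom g`. -/
def sqcap (f g : MFn) : MFn where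
  A := f.A.prod g.A
  B := f.B.sum g.B
  f := fun xy =>
    if (f.f xy.1).Nonempty ∧ (g.f xy.2).Nonempty then
      (Sum.inl '' f.f xy.1) ∪ (Sum.inr '' g.f xy.2)
    else ∅

/-- The join `f ⊞ g : ⊆ X₀ ⊔ X₁ ⇉ Ŷ₀ × Ŷ₁`, with `(f ⊞ g)(⟨0,x⟩) = f(x) × Ŷ₁` and
`(f ⊞ g)(⟨1,x⟩) = Ŷ₀ × g(x)`. -/
def boxplus (f g : MFn) : MFn where
  A := f.A.sum g.A
  B := (f.B.hat).prod (g.B.hat)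
  f := Sum.elim
    (fun x => (Option.some '' f.f x) ×ˢ (Set.univ : Set (Option g.B.X)))
    (fun y => (Set.univ : Set (Option f.B.X)) ×ˢ (Option.some '' g.f y))

end MFn

/-- `F ⊢ f`: the partial function `F : ⊆ 2^ω → 2^ω` is a realizer of `f`, i.e.
`δ_Y F(p) ∈ f δ_X(p)` for every `p ∈ dom(f δ_X)`. -/
def Realizes (F : Cantor →. Cantor) (f : MFn) : Prop :=
  ∀ p x, x ∈ f.A.δ p → (f.f x).Nonempty →
    ∃ q ∈ F p, ∃ y ∈ f.B.δ q, y ∈ f.f x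

/-- Composition of partial functions on Cantor space: `pcomp F G = F ∘ G`. -/
def pcomp (F G : Cantor →. Cantor) : Cantor →. Cantor := fun p => (G p).bind F

/-- Strong Weihrauch reducibility: `f ≤_sW g` iff there are Turing functionals `Φ, Ψ` with
`Ψ G Φ ⊢ f` for every `G ⊢ g`. -/
def sWLe (f g : MFn) : Prop :=
  ∃ Φ Ψ : TuringFunctional, ∀ G : Cantor →. Cantor, Realizes G g →
    Realizes (pcomp Ψ.eval (pcomp G Φ.eval)) f

/-- Strong Weihrauch equivalence. -/
def sWEq (f g : MFn) : Prop := sWLe f g ∧ sWLe g f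

/-- Weihrauch reducibility: `f ≤_W g` iff there are Turing functionals `Φ, Ψ` with
`Ψ⟨id, G Φ⟩ ⊢ f` for every `G ⊢ g`. -/
def wLe (f g : MFn) : Prop :=
  ∃ Φ Ψ : TuringFunctional, ∀ G : Cantor →. Cantor, Realizes G g →
    Realizes (fun p => (pcomp G Φ.eval p).bind fun q => Ψ.eval (pairC p q)) f

/-- Weihrauch equivalence. -/
def wEq (f g : MFn) : Prop := wLe f g ∧ wLe g f

/-- Cantor space as a represented space, with the identity representation. -/
def CantorSp : RepSp where
  X := Cantor
  δ := fun p => Part.some p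
  surj := fun p => ⟨p, Part.mem_some_iff.mpr rfl⟩

/-- A partial multifunction on Cantor space, viewed as a multifunction on represented
spaces via the identity representation. -/
def ofCantor (F : Cantor → Set Cantor) : MFn := ⟨CantorSp, CantorSp, F⟩

/-! ### Further definitions used in the statements -/

/-- `c` is an index for the Turing functional `Ψ`. -/
def codesTF (c : Nat.Partrec.Code) (Ψ : TuringFunctional) : Prop :=
  ∀ (σ : List Bool) (n : ℕ),
    c.eval (Nat.pair (Encodable.encode σ) n) = Part.some (Encodable.encode (Ψ.approx σ n))

/-- The multifunction `h` of Lemma 4.4: `h(⟨0,p⟩)` consists of all pairs `⟨a,q⟩` where `a`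
is a total monotone approximation with `e(a) ∈ F(p)`, and `h(⟨1,p⟩)` of all pairs `⟨q,a⟩`
where `a` is a total monotone approximation with `e(a) ∈ G(p)`. -/
def hJoin (F G : Cantor → Set Cantor) : Cantor → Set Cantor := fun r =>
  {z | leftC r = natSet 0 ∧
    ∃ a q, z = pairC a q ∧ TotalMonotoneApprox a ∧ eVal a ∈ F (rightC r)} ∪
  {z | leftC r = natSet 1 ∧
    ∃ q a, z = pairC q a ∧ TotalMonotoneApprox a ∧ eVal a ∈ G (rightC r)}

/-- A single-valued partial function on Cantor space, viewed as a partial multifunction on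
represented spaces (via the identity representation). -/
def pfnToM (F : Cantor →. Cantor) : MFn := ofCantor fun p => {q | q ∈ F p}

/-- The single-point partial function `{p} → {q}`. -/
def singleFn (p q : Cantor) : MFn := ofCantor fun r => if r = p then {q} else ∅

/-- `A` is Medvedev reducible to `B`. -/
def MedvedevLe (A B : Set Cantor) : Prop :=
  ∃ Φ : TuringFunctional, ∀ p ∈ B, ∃ q ∈ Φ.eval p, q ∈ A

/-- The all-zero sequence `0^ω`. -/
def zeroSeq : Cantor := fun _ => false

/-- `d_A : A → {0^ω}`. -/
def dFn (A : Set Cantor) : MFn := ofCantor fun p => if p ∈ A then {zeroSeq} else ∅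

/-- `A ⊔ B ⊆ 2^ω`: all `⟨i,p⟩` with `i < 2` and `p ∈ A` if `i = 0`, `p ∈ B` if `i = 1`. -/
def setSum (A B : Set Cantor) : Set Cantor :=
  {r | ∃ p ∈ A, r = inC 0 p} ∪ {r | ∃ p ∈ B, r = inC 1 p}

/-- `A × B ⊆ 2^ω`: all pairs `⟨p,q⟩` with `p ∈ A` and `q ∈ B`. -/
def setProd (A B : Set Cantor) : Set Cantor := {r | ∃ p ∈ A, ∃ q ∈ B, r = pairC p q}

/-- `p` is a name of an instance of `f`. -/
def domName (f : MFn) (p : Cantor) : Prop := ∃ x ∈ f.A.δ p, (f.f x).Nonempty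

/-- `q` is a name of a solution to the instance of `f` named by `p`. -/
def solName (f : MFn) (p q : Cantor) : Prop :=
  ∃ x ∈ f.A.δ p, ∃ y ∈ f.B.δ q, y ∈ f.f x

/-- Strong computable reducibility `f ≤_sc g`: every name `p` of an instance of `f`
computes a name `p'` of an instance of `g` such that every name of a solution to the
latter computes a name of a solution to the former. -/
def scLe (f g : MFn) : Prop :=
  ∀ p, domName f p → ∃ p', TuringLe p' p ∧ domName g p' ∧
    ∀ q, solName g p' q → ∃ z, TuringLe z q ∧ solName f p z

/-- Strong computable equivalence. -/
def scEq (f g : MFn) : Prop := scLe f g ∧ scLe g f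

/-! That `f ⊞ g` is an upper bound is easy: tag a name `p` of an instance of `f` as `⟨0, p⟩`,
and read the solution off the first component of the answer, a total monotone approximation.

For the supremum property, given reductions `(Φ₀, Ψ₀)` of `f` and `(Φ₁, Ψ₁)` of `g` to `h`, the
forward functional branches on the tag. The backward functional must be total even though only
one of `Ψ₀(r)`, `Ψ₁(r)` need be defined; it therefore outputs the pair of *monotone
approximations* of both. Such an approximation exists for every `r`, and it is total with value
`Ψᵢ(r)` whenever `Ψᵢ(r)` is defined; so the inactive side merely names some element of the
completion `Ŷ`, while the active side names the solution. -/

def ofList (σ : List Bool) : Cantor := fun m => σ.getD m false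

section Prefixes

variable {p q : Cantor} {s t m : ℕ}

@[simp]
lemma length_initSeg : (initSeg p s).length = s := by
  simp [initSeg]

lemma take_initSeg (h : t ≤ s) : (initSeg p s).take t = initSeg p t := by
  rw [initSeg, ← List.map_take, List.take_range, Nat.min_eq_left h, initSeg]

lemma initSeg_prefix (h : s ≤ t) : initSeg p s <+: initSeg p t := by
  rw [← take_initSeg h]
  exact List.take_prefix _ _

lemma initSeg_congr (h : ∀ m < s, p m = q m) : initSeg p s = initSeg q s :=
  List.map_congr_left fun m hm => h m (List.mem_range.1 hm)

lemma head?_initSeg (hs : 0 < s) : (initSeg p s).head? = some (p 0) := by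
  obtain ⟨t, rfl⟩ := Nat.exists_eq_add_of_lt hs
  simp [initSeg, List.range_succ_eq_map]

lemma ofList_initSeg (h : m < s) : ofList (initSeg p s) m = p m := by
  simp [ofList, initSeg, List.getD_eq_getElem?_getD, h]

lemma apply_eq_true_of_ofList_initSeg (h : ofList (initSeg p s) m = true) : p m = true := by
  by_cases hm : m < s
  · rwa [ofList_initSeg hm] at h
  · rw [ofList, List.getD_eq_default _ _ (by simpa using hm)] at h
    cases h

lemma primrec_initSeg_ofList : Primrec₂ fun (σ : List Bool) (s : ℕ) => initSeg (ofList σ) s :=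
  Primrec.list_map (Primrec.list_range.comp Primrec.snd)
    ((Primrec.list_getD false).comp (Primrec.fst.comp Primrec.fst) Primrec.snd).to₂

end Prefixes

lemma findSome?_congr {α β : Type*} {l : List α} {f g : α → Option β}
    (h : ∀ x ∈ l, f x = g x) : l.findSome? f = l.findSome? g := by
  induction l with
  | nil => rfl
  | cons x l ih =>
    simp only [List.mem_cons, forall_eq_or_imp] at h
    simp only [List.findSome?_cons, h.1, ih h.2]

section BoundedSearch

variable {α β : Type} [Primcodable α] [Primcodable β] {f : α → ℕ}

lemma computable_all_range {P : α → ℕ → Bool} (hf : Computable f) (hP : Computable₂ P) :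
    Computable fun a => (List.range (f a)).all (P a) := by
  refine (Computable.nat_rec hf (Computable.const true)
    (Primrec.and.to_comp.comp (Computable.snd.comp Computable.snd)
      (hP.comp Computable.fst (Computable.fst.comp Computable.snd))).to₂).of_eq fun a => ?_
  induction f a with
  | zero => rfl
  | succ n ih => simp [List.range_succ, ← ih]

lemma computable_findSome?_range {g : α → ℕ → Option β} (hf : Computable f)
    (hg : Computable₂ g) : Computable fun a => (List.range (f a)).findSome? (g a) := by
  refine (Computable.nat_rec hf (Computable.const none)
    (Primrec.option_orElse.to_comp.comp (Computable.snd.comp Computable.snd)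
      (hg.comp Computable.fst (Computable.fst.comp Computable.snd))).to₂).of_eq fun a => ?_
  induction f a with
  | zero => rfl
  | succ n ih => simp [List.range_succ, List.findSome?_append, ← ih]

end BoundedSearch

@[simp]
lemma unpair_tpl (n s i : ℕ) : (tpl n s i).unpair.1 = n ∧ (tpl n s i).unpair.2.unpair.1 = s ∧
    (tpl n s i).unpair.2.unpair.2 = i := by
  simp [tpl]

lemma eVal_eq_of_apply_tpl {a : Cantor} (ha : MonotoneApprox a) {n s i : ℕ} (hi : i < 2)
    (h : a (tpl n s i) = true) : eVal a n = (i == 1) := by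
  obtain rfl | rfl : i = 0 ∨ i = 1 := by omega
  · suffices ¬ ∃ t, a (tpl n t 1) = true by simpa [eVal]
    rintro ⟨t, ht⟩
    exact absurd (ha.2.1 n s t 0 1 h ht).2 zero_ne_one
  · simpa [eVal] using ⟨s, h⟩

namespace TuringFunctional

variable {Φ : TuringFunctional} {p q : Cantor} {n s t : ℕ} {b b' : Bool}

lemma approx_agree (h₁ : Φ.approx (initSeg p s) n = some b)
    (h₂ : Φ.approx (initSeg p t) n = some b') : b = b' := by
  rcases le_total s t with h | h
  · simpa [Φ.mono _ _ _ _ (initSeg_prefix h) h₁] using h₂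
  · simpa [Φ.mono _ _ _ _ (initSeg_prefix h) h₂] using h₁.symm

lemma mem_eval : q ∈ Φ.eval p ↔ ∀ n, ∃ s, Φ.approx (initSeg p s) n = some (q n) := by
  constructor
  · rintro ⟨hdom, rfl⟩ n
    exact ⟨_, (hdom n).choose_spec.choose_spec⟩
  · intro h
    have hdom : ∀ n, ∃ s b, Φ.approx (initSeg p s) n = some b :=
      fun n => ⟨_, _, (h n).choose_spec⟩
    exact ⟨hdom, funext fun n => approx_agree (hdom n).choose_spec.choose_spec (h n).choose_spec⟩

/-- Answering with the first initial segment of the oracle prefix on which `out` answers makes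
the functional monotone, whatever `out` is. -/
def ofStages (out : List Bool → ℕ → Option Bool) (hout : Computable₂ out) : TuringFunctional where
  approx σ n := (List.range (σ.length + 1)).findSome? fun s => out (σ.take s) n
  computable := computable_findSome?_range
    (Computable.succ.comp (Computable.list_length.comp Computable.fst))
    (hout.comp ((Primrec.list_take.comp Primrec.snd (Primrec.fst.comp Primrec.fst)).to_comp)
      (Computable.snd.comp Computable.fst))
  mono σ τ n b hστ h := by
    obtain ⟨ρ, rfl⟩ := hστ
    have hσ : (List.range (σ.length + 1)).findSome? (fun s => out ((σ ++ ρ).take s) n) = some b :=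
      h ▸ findSome?_congr fun s hs => by
        rw [List.take_append_of_le_length (Nat.lt_succ_iff.1 (List.mem_range.1 hs))]
    rw [List.length_append, Nat.add_right_comm, List.range_add, List.findSome?_append, hσ,
      Option.some_or]

section OfStages

variable {out : List Bool → ℕ → Option Bool} {hout : Computable₂ out}

lemma ofStages_approx_initSeg :
    (ofStages out hout).approx (initSeg p t) n =
      (List.range (t + 1)).findSome? fun s => out (initSeg p s) n := by
  simp only [ofStages, length_initSeg]
  exact findSome?_congr fun s hs => by rw [take_initSeg (Nat.lt_succ_iff.1 (List.mem_range.1 hs))]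

lemma mem_eval_ofStages (hdef : ∀ n, ∃ s, (out (initSeg p s) n).isSome)
    (hcons : ∀ n s b, out (initSeg p s) n = some b → b = q n) :
    q ∈ (ofStages out hout).eval p := by
  refine mem_eval.2 fun n => ?_
  obtain ⟨t, ht⟩ := hdef n
  refine ⟨t, ?_⟩
  rw [ofStages_approx_initSeg]
  obtain ⟨b, hb⟩ := Option.isSome_iff_exists.1 <|
    (List.findSome?_isSome_iff (f := fun s => out (initSeg p s) n)).2
      ⟨t, List.self_mem_range_succ, ht⟩
  obtain ⟨s, -, hs⟩ := List.exists_of_findSome?_eq_some hb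
  rw [hb, hcons n s b hs]

end OfStages

def HasUse (F : Cantor → Cantor) (use : ℕ → ℕ) : Prop :=
  ∀ p q n, (∀ m < use n, p m = q m) → F p n = F q n

def ofUse (F : Cantor → Cantor) (use : ℕ → ℕ) (hF : Computable₂ fun σ n => F (ofList σ) n)
    (huse : Computable use) : TuringFunctional :=
  ofStages (fun σ n => bif σ.length == use n then some (F (ofList σ) n) else none) <|
    Computable.cond
      (Primrec.beq.to_comp.comp (Computable.list_length.comp Computable.fst)
        (huse.comp Computable.snd))
      (Computable.option_some.comp hF) (Computable.const none)

lemma mem_eval_ofUse {F : Cantor → Cantor} {use : ℕ → ℕ} {hF huse} (h : HasUse F use)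
    (p : Cantor) : F p ∈ (ofUse F use hF huse).eval p := by
  refine mem_eval_ofStages (fun n => ⟨use n, by simp⟩) fun n s b hb => ?_
  cases hs : (initSeg p s).length == use n <;> simp only [hs, cond_false, cond_true] at hb
  · cases hb
  · rw [beq_iff_eq, length_initSeg] at hs
    subst hs
    rw [← Option.some_inj.1 hb]
    exact h _ _ _ fun m hm => ofList_initSeg hm

end TuringFunctional

open TuringFunctional

def embed (i : ℕ) : TuringFunctional :=
  ofUse (inC i) (fun n => n / 2 + 1)
    (Primrec.ite (Primrec.eq.comp (Primrec.nat_mod.comp Primrec.snd (Primrec.const 2))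
        (Primrec.const 0))
      (Primrec.eq.comp (Primrec.nat_div.comp Primrec.snd (Primrec.const 2))
        (Primrec.const i)).decide
      ((Primrec.list_getD false).comp Primrec.fst
        (Primrec.nat_div.comp Primrec.snd (Primrec.const 2)))).to_comp
    (Primrec.succ.comp (Primrec.nat_div.comp Primrec.id (Primrec.const 2))).to_comp

lemma mem_eval_embed (i : ℕ) (p : Cantor) : inC i p ∈ (embed i).eval p := by
  refine mem_eval_ofUse (fun p q n h => ?_) p
  simp only [inC, pairC]
  split_ifs
  · rfl
  · exact h _ (Nat.lt_succ_self _)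

def evalSide (j : ℕ) : TuringFunctional :=
  ofStages (fun σ n => (List.range σ.length).findSome? fun k =>
      bif ofList σ (2 * k + j) && k.unpair.1 == n then some (k.unpair.2.unpair.2 == 1)
      else none) <|
    computable_findSome?_range (Computable.list_length.comp Computable.fst) <|
      Computable.cond
        (Primrec.and.comp
          ((Primrec.list_getD false).comp (Primrec.fst.comp Primrec.fst)
            (Primrec.nat_add.comp (Primrec.nat_double.comp Primrec.snd) (Primrec.const j)))
          (Primrec.beq.comp (Primrec.fst.comp (Primrec.unpair.comp Primrec.snd))
            (Primrec.snd.comp Primrec.fst))).to_comp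
        (Primrec.option_some.comp (Primrec.beq.comp
          (Primrec.snd.comp (Primrec.unpair.comp (Primrec.snd.comp
            (Primrec.unpair.comp Primrec.snd)))) (Primrec.const 1))).to_comp
        (Computable.const none)

lemma mem_eval_evalSide {j : ℕ} {r : Cantor} (ha : TotalMonotoneApprox fun k => r (2 * k + j)) :
    eVal (fun k => r (2 * k + j)) ∈ (evalSide j).eval r := by
  refine mem_eval_ofStages (fun n => ?_) fun n s b hb => ?_
  · obtain ⟨s, i, -, hk⟩ := ha.2 n
    refine ⟨2 * tpl n s i + j + 1, List.findSome?_isSome_iff.2 ⟨tpl n s i, ?_, ?_⟩⟩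
    · simp only [length_initSeg, List.mem_range]
      omega
    · have hk : r (2 * tpl n s i + j) = true := hk
      simp [ofList_initSeg (Nat.lt_succ_self _), hk]
  · obtain ⟨k, -, hk⟩ := List.exists_of_findSome?_eq_some hb
    cases hbit : ofList (initSeg r s) (2 * k + j) && k.unpair.1 == n <;>
      simp only [hbit, cond_false, cond_true, reduceCtorEq, Option.some_inj] at hk
    simp only [Bool.and_eq_true, beq_iff_eq] at hbit
    have hr : r (2 * k + j) = true := apply_eq_true_of_ofList_initSeg hbit.1
    obtain ⟨n', s', i, hi, rfl⟩ := ha.1.1 k hr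
    simp only [unpair_tpl] at hbit hk
    rw [← hk, ← hbit.2]
    exact (eVal_eq_of_apply_tpl ha.1 hi hr).symm

def branch (Φ₀ Φ₁ : TuringFunctional) : TuringFunctional :=
  ofStages (fun σ n => σ.head?.bind fun b =>
      (bif b then Φ₀ else Φ₁).approx (initSeg (rightC (ofList σ)) (σ.length / 2)) n) <|
    Computable.option_bind (Primrec.list_head?.comp Primrec.fst).to_comp <|
      have hσ : Computable fun x : (List Bool × ℕ) × Bool =>
          initSeg (rightC (ofList x.1.1)) (x.1.1.length / 2) :=
        (Primrec.list_map (Primrec.list_range.comp (Primrec.nat_div.comp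
            (Primrec.list_length.comp (Primrec.fst.comp Primrec.fst)) (Primrec.const 2)))
          ((Primrec.list_getD false).comp (Primrec.fst.comp (Primrec.fst.comp Primrec.fst))
            (Primrec.nat_double_succ.comp Primrec.snd)).to₂).to_comp
      (Computable.cond Computable.snd
        (Φ₀.computable.comp hσ (Computable.snd.comp Computable.fst))
        (Φ₁.computable.comp hσ (Computable.snd.comp Computable.fst))).of_eq
        fun x => by cases x.2 <;> rfl

lemma mem_eval_branch {Φ₀ Φ₁ : TuringFunctional} {p q : Cantor}
    (h : q ∈ (bif p 0 then Φ₀ else Φ₁).eval (rightC p)) : q ∈ (branch Φ₀ Φ₁).eval p := by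
  have hout (s n : ℕ) (hs : 0 < s) : (initSeg p s).head?.bind (fun b =>
      (bif b then Φ₀ else Φ₁).approx
        (initSeg (rightC (ofList (initSeg p s))) ((initSeg p s).length / 2)) n) =
      (bif p 0 then Φ₀ else Φ₁).approx (initSeg (rightC p) (s / 2)) n := by
    rw [head?_initSeg hs, Option.bind_some, length_initSeg,
      initSeg_congr (p := rightC (ofList (initSeg p s))) (q := rightC p)
        fun m hm => ofList_initSeg (by omega)]
  rw [mem_eval] at h
  refine mem_eval_ofStages (fun n => ?_) fun n s b hb => ?_
  · obtain ⟨t, ht⟩ := h n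
    refine ⟨2 * t + 1, ?_⟩
    rw [hout _ _ (by omega), show (2 * t + 1) / 2 = t by omega, ht]
    rfl
  · rcases Nat.eq_zero_or_pos s with rfl | hs
    · cases hb
    · obtain ⟨t, ht⟩ := h n
      rw [hout _ _ hs] at hb
      exact approx_agree hb ht

section MonoApprox

variable {α : Type} [Primcodable α] {Ψ : TuringFunctional} {r q : Cantor}
  {σ τ : List Bool} {m n s : ℕ} {b : Bool}

def convUpTo (Ψ : TuringFunctional) (σ : List Bool) (n : ℕ) : Bool :=
  (List.range (n + 1)).all fun m => (Ψ.approx σ m).isSome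

lemma convUpTo_iff : convUpTo Ψ σ n = true ↔ ∀ m ≤ n, (Ψ.approx σ m).isSome := by
  simp [convUpTo]

lemma convUpTo_of_prefix (h : σ <+: τ) (hc : convUpTo Ψ σ n = true) :
    convUpTo Ψ τ n = true := by
  refine convUpTo_iff.2 fun m hm => ?_
  obtain ⟨b, hb⟩ := Option.isSome_iff_exists.1 (convUpTo_iff.1 hc m hm)
  simp [Ψ.mono _ _ _ _ h hb]

lemma convUpTo_of_le (h : m ≤ n) (hc : convUpTo Ψ σ n = true) : convUpTo Ψ σ m = true :=
  convUpTo_iff.2 fun k hk => convUpTo_iff.1 hc k (hk.trans h)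

lemma computable_convUpTo {σ : α → List Bool} {n : α → ℕ} (hσ : Computable σ)
    (hn : Computable n) : Computable fun a => convUpTo Ψ (σ a) (n a) :=
  computable_all_range (Computable.succ.comp hn)
    (Primrec.option_isSome.to_comp.comp
      (Ψ.computable.comp (hσ.comp Computable.fst) Computable.snd))

def firstStageValue (Ψ : TuringFunctional) (r : Cantor) (n s : ℕ) : Option Bool :=
  bif convUpTo Ψ (initSeg r s) n && (s == 0 || !convUpTo Ψ (initSeg r (s - 1)) n)
  then Ψ.approx (initSeg r s) n else none

lemma firstStageValue_eq_some_iff : firstStageValue Ψ r n s = some b ↔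
    IsLeast {t | convUpTo Ψ (initSeg r t) n} s ∧ Ψ.approx (initSeg r s) n = some b := by
  have hleast : IsLeast {t | convUpTo Ψ (initSeg r t) n} s ↔
      (convUpTo Ψ (initSeg r s) n && (s == 0 || !convUpTo Ψ (initSeg r (s - 1)) n)) = true := by
    simp only [IsLeast, lowerBounds, Set.mem_ofPred_eq, Bool.and_eq_true, Bool.or_eq_true,
      beq_iff_eq, Bool.not_eq_true']
    refine and_congr_right fun _ => ⟨fun h => ?_, fun h t ht => ?_⟩
    · rcases Nat.eq_zero_or_pos s with hs | hs
      · exact Or.inl hs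
      · exact Or.inr (Bool.eq_false_iff.2 fun hc => by have := h hc; omega)
    · by_contra hts
      rcases h with rfl | h
      · omega
      · simp [convUpTo_of_prefix (initSeg_prefix (s := t) (t := s - 1) (by omega)) ht] at h
  rw [hleast, firstStageValue]
  cases convUpTo Ψ (initSeg r s) n && (s == 0 || !convUpTo Ψ (initSeg r (s - 1)) n) <;> simp

lemma firstStageValue_congr {p : Cantor} (h : ∀ m < s, p m = q m) :
    firstStageValue Ψ p n s = firstStageValue Ψ q n s := by
  simp only [firstStageValue]
  rw [initSeg_congr h, initSeg_congr fun m hm => h m (by omega)]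

lemma exists_firstStageValue (hq : q ∈ Ψ.eval r) (n : ℕ) :
    ∃ s, firstStageValue Ψ r n s = some (q n) := by
  rw [mem_eval] at hq
  choose stage hstage using hq
  have hconv : ∃ t, convUpTo Ψ (initSeg r t) n = true := by
    refine ⟨(Finset.range (n + 1)).sup stage, convUpTo_iff.2 fun m hm => ?_⟩
    rw [Ψ.mono _ _ _ _ (initSeg_prefix (Finset.le_sup (Finset.mem_range_succ_iff.2 hm)))
      (hstage m)]
    rfl
  have hleast : IsLeast {t | convUpTo Ψ (initSeg r t) n} (Nat.find hconv) :=
    ⟨Nat.find_spec hconv, fun t ht => Nat.find_min' hconv ht⟩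
  obtain ⟨b, hb⟩ := Option.isSome_iff_exists.1 (convUpTo_iff.1 hleast.1 n le_rfl)
  exact ⟨_, firstStageValue_eq_some_iff.2
    ⟨hleast, hb.trans (congrArg some (approx_agree hb (hstage n)))⟩⟩

lemma computable_firstStageValue {σ : α → List Bool} {n s : α → ℕ} (hσ : Computable σ)
    (hn : Computable n) (hs : Computable s) :
    Computable fun a => firstStageValue Ψ (ofList (σ a)) (n a) (s a) :=
  have hinit {s : α → ℕ} (hs : Computable s) :
      Computable fun a => initSeg (ofList (σ a)) (s a) :=
    primrec_initSeg_ofList.to_comp.comp hσ hs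
  Computable.cond
    (Primrec.and.to_comp.comp (computable_convUpTo (hinit hs) hn)
      (Primrec.or.to_comp.comp (Primrec.beq.to_comp.comp hs (Computable.const 0))
        (Primrec.not.to_comp.comp (computable_convUpTo
          (hinit (Primrec.pred.to_comp.comp hs)) hn))))
    (Ψ.computable.comp (hinit hs) hn) (Computable.const none)

/-- A variant of `approxSeq` that needs no `Convention`: its entries are `⟨n, s + n, Ψ^r(n)⟩`,
where `s` is the first stage by which `Ψ^r` has converged on all of `0, …, n`. The shift by `n`
makes the stages strictly increasing. -/
def monoApprox (Ψ : TuringFunctional) (r : Cantor) (k : ℕ) : Bool :=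
  decide (k.unpair.1 ≤ k.unpair.2.unpair.1) &&
    decide ((firstStageValue Ψ r k.unpair.1 (k.unpair.2.unpair.1 - k.unpair.1)).map Bool.toNat =
      some k.unpair.2.unpair.2)

lemma monoApprox_eq_true_iff {k : ℕ} : monoApprox Ψ r k = true ↔
    ∃ n s b, k = tpl n (s + n) b.toNat ∧ firstStageValue Ψ r n s = some b := by
  constructor
  · intro h
    simp only [monoApprox, Bool.and_eq_true, decide_eq_true_eq, Option.map_eq_some_iff] at h
    obtain ⟨hle, b, hb, hi⟩ := h
    refine ⟨_, _, b, ?_, hb⟩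
    rw [hi, Nat.sub_add_cancel hle]
    simp [tpl]
  · rintro ⟨n, s, b, rfl, hb⟩
    simp [monoApprox, hb]

lemma monotoneApprox_monoApprox (Ψ : TuringFunctional) (r : Cantor) :
    MonotoneApprox (monoApprox Ψ r) := by
  refine ⟨fun k hk => ?_, fun n s t i j hs ht => ?_, fun m n s t i j hs ht hmn => ?_⟩
  · obtain ⟨n, s, b, rfl, -⟩ := monoApprox_eq_true_iff.1 hk
    exact ⟨n, s + n, b.toNat, Bool.toNat_lt b, rfl⟩
  · obtain ⟨n₁, s₁, b₁, he₁, hb₁⟩ := monoApprox_eq_true_iff.1 hs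
    obtain ⟨n₂, s₂, b₂, he₂, hb₂⟩ := monoApprox_eq_true_iff.1 ht
    obtain ⟨rfl, rfl, rfl⟩ := tpl_inj he₁
    obtain ⟨rfl, rfl, rfl⟩ := tpl_inj he₂
    obtain ⟨hl₁, ha₁⟩ := firstStageValue_eq_some_iff.1 hb₁
    obtain ⟨hl₂, ha₂⟩ := firstStageValue_eq_some_iff.1 hb₂
    obtain rfl := hl₁.unique hl₂
    obtain rfl := approx_agree ha₁ ha₂
    exact ⟨rfl, rfl⟩
  · obtain ⟨n₁, s₁, b₁, he₁, hb₁⟩ := monoApprox_eq_true_iff.1 hs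
    obtain ⟨n₂, s₂, b₂, he₂, hb₂⟩ := monoApprox_eq_true_iff.1 ht
    obtain ⟨rfl, rfl, -⟩ := tpl_inj he₁
    obtain ⟨rfl, rfl, -⟩ := tpl_inj he₂
    have hl₁ := (firstStageValue_eq_some_iff.1 hb₁).1
    have hl₂ := (firstStageValue_eq_some_iff.1 hb₂).1
    have : s₁ ≤ s₂ := hl₁.2 (convUpTo_of_le hmn.le hl₂.1)
    omega

lemma apply_monoApprox_of_mem_eval (hq : q ∈ Ψ.eval r) (n : ℕ) :
    ∃ t, monoApprox Ψ r (tpl n t (q n).toNat) = true := by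
  obtain ⟨s, hs⟩ := exists_firstStageValue hq n
  exact ⟨s + n, monoApprox_eq_true_iff.2 ⟨n, s, q n, rfl, hs⟩⟩

lemma totalMonotoneApprox_monoApprox (hq : q ∈ Ψ.eval r) :
    TotalMonotoneApprox (monoApprox Ψ r) :=
  ⟨monotoneApprox_monoApprox Ψ r, fun n =>
    have ⟨t, ht⟩ := apply_monoApprox_of_mem_eval hq n
    ⟨t, _, Bool.toNat_lt _, ht⟩⟩

lemma eVal_monoApprox (hq : q ∈ Ψ.eval r) : eVal (monoApprox Ψ r) = q := by
  funext n
  obtain ⟨t, ht⟩ := apply_monoApprox_of_mem_eval hq n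
  rw [eVal_eq_of_apply_tpl (monotoneApprox_monoApprox Ψ r) (Bool.toNat_lt _) ht]
  cases q n <;> rfl

lemma computable_monoApprox {σ : α → List Bool} {k : α → ℕ} (hσ : Computable σ)
    (hk : Computable k) : Computable fun a => monoApprox Ψ (ofList (σ a)) (k a) := by
  have hn : Computable fun a => (k a).unpair.1 :=
    (Primrec.fst.comp Primrec.unpair).to_comp.comp hk
  have ht : Computable fun a => (k a).unpair.2.unpair.1 :=
    (Primrec.fst.comp (Primrec.unpair.comp (Primrec.snd.comp Primrec.unpair))).to_comp.comp hk
  have hi : Computable fun a => (k a).unpair.2.unpair.2 :=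
    (Primrec.snd.comp (Primrec.unpair.comp (Primrec.snd.comp Primrec.unpair))).to_comp.comp hk
  have hv : Computable fun a => (firstStageValue Ψ (ofList (σ a)) (k a).unpair.1
      ((k a).unpair.2.unpair.1 - (k a).unpair.1)).map Bool.toNat :=
    Computable.option_map (computable_firstStageValue hσ hn (Primrec.nat_sub.to_comp.comp ht hn))
      ((Primrec.dom_bool Bool.toNat).comp Primrec.snd).to_comp.to₂
  have hle : Computable fun a => decide ((k a).unpair.1 ≤ (k a).unpair.2.unpair.1) :=
    Primrec.nat_le.decide.to_comp.comp hn ht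
  have heq := Primrec.eq.decide.to_comp.comp hv (Computable.option_some.comp hi)
  exact (Primrec.and.to_comp.comp hle heq).of_eq fun a => rfl

lemma hasUse_monoApprox (Ψ : TuringFunctional) :
    HasUse (monoApprox Ψ) fun k => k.unpair.2.unpair.1 - k.unpair.1 := by
  intro p q k h
  simp only [monoApprox, firstStageValue_congr h]

end MonoApprox

def join (Ψ₀ Ψ₁ : TuringFunctional) : TuringFunctional :=
  ofUse (fun r => pairC (monoApprox Ψ₀ r) (monoApprox Ψ₁ r))
    (fun k => (k / 2).unpair.2.unpair.1 - (k / 2).unpair.1)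
    ((Computable.cond (Primrec.beq.comp (Primrec.nat_mod.comp Primrec.snd (Primrec.const 2))
        (Primrec.const 0)).to_comp
      (computable_monoApprox (Ψ := Ψ₀) Computable.fst
        (Primrec.nat_div.comp Primrec.snd (Primrec.const 2)).to_comp)
      (computable_monoApprox (Ψ := Ψ₁) Computable.fst
        (Primrec.nat_div.comp Primrec.snd (Primrec.const 2)).to_comp)).of_eq
      fun x => by rcases Nat.mod_two_eq_zero_or_one x.2 with h | h <;> simp [pairC, h])
    ((Primrec.nat_sub.comp
      (Primrec.fst.comp (Primrec.unpair.comp (Primrec.snd.comp (Primrec.unpair.comp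
        (Primrec.nat_div.comp Primrec.id (Primrec.const 2))))))
      (Primrec.fst.comp (Primrec.unpair.comp
        (Primrec.nat_div.comp Primrec.id (Primrec.const 2))))).to_comp)

lemma mem_eval_join (Ψ₀ Ψ₁ : TuringFunctional) (r : Cantor) :
    pairC (monoApprox Ψ₀ r) (monoApprox Ψ₁ r) ∈ (join Ψ₀ Ψ₁).eval r := by
  refine mem_eval_ofUse (F := fun r => pairC (monoApprox Ψ₀ r) (monoApprox Ψ₁ r))
    (fun p q k h => ?_) r
  simp only [pairC]
  split_ifs
  · exact hasUse_monoApprox Ψ₀ p q (k / 2) h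
  · exact hasUse_monoApprox Ψ₁ p q (k / 2) h

lemma natSet_one_ne_zero : natSet 1 ≠ natSet 0 := fun h => by
  simpa [natSet] using congrFun h 0

lemma leftC_inC (i : ℕ) (p : Cantor) : leftC (inC i p) = natSet i := leftC_pairC _ _

lemma rightC_inC (i : ℕ) (p : Cantor) : rightC (inC i p) = p := rightC_pairC _ _

namespace RepSp

variable {A B : RepSp} {r : Cantor}

lemma sum_δ : (A.sum B).δ r = (if leftC r = natSet 0 then (A.δ (rightC r)).map Sum.inl
    else if leftC r = natSet 1 then (B.δ (rightC r)).map Sum.inr else Part.none :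
      Part (A.X ⊕ B.X)) := rfl

lemma inl_mem_sum_δ {x : A.X} :
    Sum.inl x ∈ (A.sum B).δ r ↔ leftC r = natSet 0 ∧ x ∈ A.δ (rightC r) := by
  show Sum.inl x ∈ (_ : Part (A.X ⊕ B.X)) ↔ _
  rw [sum_δ]
  split_ifs <;> simp [*, natSet_one_ne_zero, Part.mem_map_iff, Part.notMem_none]

lemma inr_mem_sum_δ {y : B.X} :
    Sum.inr y ∈ (A.sum B).δ r ↔ leftC r = natSet 1 ∧ y ∈ B.δ (rightC r) := by
  show Sum.inr y ∈ (_ : Part (A.X ⊕ B.X)) ↔ _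
  rw [sum_δ]
  split_ifs <;> simp [*, natSet_one_ne_zero.symm, Part.mem_map_iff, Part.notMem_none]

lemma mem_prod_δ {x : A.X} {y : B.X} :
    (x, y) ∈ (A.prod B).δ r ↔ x ∈ A.δ (leftC r) ∧ y ∈ B.δ (rightC r) := by
  show (x, y) ∈ (A.δ (leftC r)).bind _ ↔ _
  rw [Part.mem_bind_iff]
  simp [Part.mem_map_iff]

lemma some_mem_hat_δ {y : A.X} :
    some y ∈ A.hat.δ r ↔ TotalMonotoneApprox r ∧ y ∈ A.δ (eVal r) := by
  show some y ∈ Part.some _ ↔ _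
  rw [Part.mem_some_iff, eq_comm, Part.toOption_eq_some_iff]
  constructor
  · intro h
    obtain ⟨_, ⟨hr, rfl⟩, hy⟩ := Part.mem_bind_iff.1 h
    exact ⟨hr, hy⟩
  · rintro ⟨hr, hy⟩
    exact Part.mem_bind_iff.2 ⟨_, ⟨hr, rfl⟩, hy⟩

lemma exists_mem_hat_δ (A : RepSp) (r : Cantor) : ∃ z, z ∈ A.hat.δ r :=
  ⟨_, Part.mem_some _⟩

lemma some_mem_hat_δ_monoApprox {Ψ : TuringFunctional} {q : Cantor} {y : A.X}
    (hq : q ∈ Ψ.eval r) (hy : y ∈ A.δ q) : some y ∈ A.hat.δ (monoApprox Ψ r) :=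
  some_mem_hat_δ.2 ⟨totalMonotoneApprox_monoApprox hq, (eVal_monoApprox hq).symm ▸ hy⟩

end RepSp

lemma mem_pcomp_pcomp {Φ G Ψ : Cantor →. Cantor} {p q : Cantor} :
    q ∈ pcomp Ψ (pcomp G Φ) p ↔ ∃ u ∈ Φ p, ∃ r ∈ G u, q ∈ Ψ r := by
  constructor
  · intro h
    obtain ⟨r, hr, hq⟩ := Part.mem_bind_iff.1 h
    obtain ⟨u, hu, hr⟩ := Part.mem_bind_iff.1 hr
    exact ⟨u, hu, r, hr, hq⟩
  · rintro ⟨u, hu, r, hr, hq⟩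
    exact Part.mem_bind_iff.2 ⟨r, Part.mem_bind_iff.2 ⟨u, hu, hr⟩, hq⟩

namespace MFn

theorem le_boxplus_left (f g : MFn) : sWLe f (f.boxplus g) := by
  refine ⟨embed 0, evalSide 0, fun G hG p x hx ⟨y, hy⟩ => ?_⟩
  have hinl : Sum.inl x ∈ (f.A.sum g.A).δ (inC 0 p) :=
    RepSp.inl_mem_sum_δ.2 ⟨leftC_inC 0 p, (rightC_inC 0 p).symm ▸ hx⟩
  obtain ⟨r, hr, ⟨_, z⟩, hδ, ⟨y, hyx, rfl⟩, -⟩ :=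
    hG (inC 0 p) (Sum.inl x) hinl ⟨(some y, none), ⟨y, hy, rfl⟩, trivial⟩
  obtain ⟨hr₀, hy⟩ := RepSp.some_mem_hat_δ.1 (RepSp.mem_prod_δ.1 hδ).1
  exact ⟨_, mem_pcomp_pcomp.2 ⟨_, mem_eval_embed 0 p, r, hr, mem_eval_evalSide (j := 0) hr₀⟩,
    y, hy, hyx⟩

theorem le_boxplus_right (f g : MFn) : sWLe g (f.boxplus g) := by
  refine ⟨embed 1, evalSide 1, fun G hG p x hx ⟨y, hy⟩ => ?_⟩
  have hinr : Sum.inr x ∈ (f.A.sum g.A).δ (inC 1 p) :=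
    RepSp.inr_mem_sum_δ.2 ⟨leftC_inC 1 p, (rightC_inC 1 p).symm ▸ hx⟩
  obtain ⟨r, hr, ⟨z, _⟩, hδ, -, ⟨y, hyx, rfl⟩⟩ :=
    hG (inC 1 p) (Sum.inr x) hinr ⟨(none, some y), trivial, ⟨y, hy, rfl⟩⟩
  obtain ⟨hr₁, hy⟩ := RepSp.some_mem_hat_δ.1 (RepSp.mem_prod_δ.1 hδ).2
  exact ⟨_, mem_pcomp_pcomp.2 ⟨_, mem_eval_embed 1 p, r, hr, mem_eval_evalSide (j := 1) hr₁⟩,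
    y, hy, hyx⟩

theorem boxplus_le {f g h : MFn} (hf : sWLe f h) (hg : sWLe g h) : sWLe (f.boxplus g) h := by
  obtain ⟨Φ₀, Ψ₀, H₀⟩ := hf
  obtain ⟨Φ₁, Ψ₁, H₁⟩ := hg
  refine ⟨branch Φ₀ Φ₁, join Ψ₀ Ψ₁, fun G hG p x hx hne => ?_⟩
  rcases x with x | x
  · obtain ⟨hp, hx⟩ := RepSp.inl_mem_sum_δ.1 hx
    obtain ⟨_, ⟨y, hy, -⟩, -⟩ := hne
    obtain ⟨q, hq, y, hyδ, hyx⟩ := H₀ G hG _ x hx ⟨y, hy⟩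
    obtain ⟨u, hu, r, hr, hqr⟩ := mem_pcomp_pcomp.1 hq
    obtain ⟨z, hz⟩ := g.B.exists_mem_hat_δ (monoApprox Ψ₁ r)
    have hp0 : p 0 = true := by simpa [leftC, natSet] using congrFun hp 0
    refine ⟨_, mem_pcomp_pcomp.2
        ⟨u, mem_eval_branch (by rwa [hp0]), r, hr, mem_eval_join Ψ₀ Ψ₁ r⟩,
      (some y, z), RepSp.mem_prod_δ.2 ⟨?_, ?_⟩, ⟨y, hyx, rfl⟩, trivial⟩
    · rw [leftC_pairC]
      exact RepSp.some_mem_hat_δ_monoApprox hqr hyδ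
    · rwa [rightC_pairC]
  · obtain ⟨hp, hx⟩ := RepSp.inr_mem_sum_δ.1 hx
    obtain ⟨_, -, ⟨y, hy, -⟩⟩ := hne
    obtain ⟨q, hq, y, hyδ, hyx⟩ := H₁ G hG _ x hx ⟨y, hy⟩
    obtain ⟨u, hu, r, hr, hqr⟩ := mem_pcomp_pcomp.1 hq
    obtain ⟨z, hz⟩ := f.B.exists_mem_hat_δ (monoApprox Ψ₀ r)
    have hp0 : p 0 = false := by simpa [leftC, natSet] using congrFun hp 0
    refine ⟨_, mem_pcomp_pcomp.2
        ⟨u, mem_eval_branch (by rwa [hp0]), r, hr, mem_eval_join Ψ₀ Ψ₁ r⟩,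
      (z, some y), RepSp.mem_prod_δ.2 ⟨?_, ?_⟩, trivial, ⟨y, hyx, rfl⟩⟩
    · rwa [leftC_pairC]
    · rw [rightC_pairC]
      exact RepSp.some_mem_hat_δ_monoApprox hqr hyδ

end MFn

/-- Theorem 3.7: `f ⊞ g` is the supremum of `f` and `g` under `≤_sW`. -/
theorem stmt5 : ∀ f g : MFn,
    sWLe f (f.boxplus g) ∧ sWLe g (f.boxplus g) ∧
    ∀ h : MFn, sWLe f h → sWLe g h → sWLe (f.boxplus g) h :=
  fun f g => ⟨f.le_boxplus_left g, f.le_boxplus_right g, fun _ => MFn.boxplus_le⟩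

end

end StrongWeihrauch
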